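/- arXiv:2411.16988 — 2 statements merged into one kernel-verified Lean document; each statement's English description precedes it below -/
import Mathlib

section
/- Let L, M, N be positive integers and let g_0, …, g_{L−1} ∈ ℓ²(ℤ²,ℍ). If the Gabor system G(g,L,M,N) is a Parseval frame for ℓ²(ℤ²,ℍ), then ∑_{l=0}^{L−1} ‖g_l‖² = N²/M². -/
noncomputable section

open scoped Real

/-- The real quaternions. -/
abbrev ℍ : Type := Quaternion ℝ

/-- `e_i θ = cos θ + (sin θ) i`. -/
def eI (θ : ℝ) : ℍ := ⟨Real.cos θ, Real.sin θ, 0, 0⟩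

/-- `e_j θ = cos θ + (sin θ) j`. -/
def eJ (θ : ℝ) : ℍ := ⟨Real.cos θ, 0, Real.sin θ, 0⟩

/-- Quaternionic pairing `⟨f,g⟩ = ∑ conj (f k) * g k`. -/
def qpair (f g : ℤ × ℤ → ℍ) : ℍ := ∑' k : ℤ × ℤ, star (f k) * g k

/-- Membership in `ℓ²(ℤ², ℍ)`. -/
def MemL2 (f : ℤ × ℤ → ℍ) : Prop := Summable fun k : ℤ × ℤ => ‖f k‖ ^ 2

/-- `‖f‖² = ∑ |f k|²`. -/
def normSq2 (f : ℤ × ℤ → ℍ) : ℝ := ∑' k : ℤ × ℤ, ‖f k‖ ^ 2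

/-- A window is real-valued if all its values lie in `ℝ ⊆ ℍ`. -/
def IsRealValued (f : ℤ × ℤ → ℍ) : Prop := ∀ k : ℤ × ℤ, f k = ((f k).re : ℍ)

/-- The Gabor atom `E_{m/M} T_{nN} w`. -/
def gaborAtom (M N : ℕ) (w : ℤ × ℤ → ℍ) (m : ℕ × ℕ) (n : ℤ × ℤ) : ℤ × ℤ → ℍ :=
  fun k =>
    eI (2 * π * (m.1 : ℝ) * (k.1 : ℝ) / (M : ℝ)) *
      w (k.1 - n.1 * (N : ℤ), k.2 - n.2 * (N : ℤ)) *
      eJ (2 * π * (m.2 : ℝ) * (k.2 : ℝ) / (M : ℝ))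

/-- The index square `{0, …, M-1}²`. -/
abbrev msq (M : ℕ) : Finset (ℕ × ℕ) := Finset.range M ×ˢ Finset.range M

/-- `k ∈ {0, …, N-1}²` inside `ℤ²`. -/
def InNsq (N : ℕ) (k : ℤ × ℤ) : Prop :=
  0 ≤ k.1 ∧ k.1 < (N : ℤ) ∧ 0 ≤ k.2 ∧ k.2 < (N : ℤ)

/-- `∑_{l<L} ∑_{n∈ℤ²} ∑_{m∈{0,…,M-1}²} |⟨E_{m/M}T_{nN}g_l, h⟩|²`. -/
def frameSum (L M N : ℕ) (g : ℕ → ℤ × ℤ → ℍ) (h : ℤ × ℤ → ℍ) : ℝ :=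
  ∑ l ∈ Finset.range L, ∑' n : ℤ × ℤ, ∑ m ∈ msq M,
    ‖qpair (gaborAtom M N (g l) m n) h‖ ^ 2

/-- Bessel system with bound `B`. -/
def IsBessel (L M N : ℕ) (g : ℕ → ℤ × ℤ → ℍ) (B : ℝ) : Prop :=
  ∀ h : ℤ × ℤ → ℍ, MemL2 h → frameSum L M N g h ≤ B * normSq2 h

/-- Frame with bounds `A ≤ B`. -/
def IsFrame (L M N : ℕ) (g : ℕ → ℤ × ℤ → ℍ) (A B : ℝ) : Prop :=
  ∀ h : ℤ × ℤ → ℍ, MemL2 h →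
    A * normSq2 h ≤ frameSum L M N g h ∧ frameSum L M N g h ≤ B * normSq2 h

/-- Parseval frame. -/
def IsParseval (L M N : ℕ) (g : ℕ → ℤ × ℤ → ℍ) : Prop :=
  ∀ h : ℤ × ℤ → ℍ, MemL2 h → frameSum L M N g h = normSq2 h

/-- Orthonormal system. -/
def IsON (L M N : ℕ) (g : ℕ → ℤ × ℤ → ℍ) : Prop :=
  ∀ l l' : ℕ, l < L → l' < L → ∀ m ∈ msq M, ∀ m' ∈ msq M, ∀ n n' : ℤ × ℤ,
    qpair (gaborAtom M N (g l) m n) (gaborAtom M N (g l') m' n') =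
      if l = l' ∧ m = m' ∧ n = n' then 1 else 0

/-- `G(k,p) = ∑_{l<L} ∑_{n∈ℤ²} g_l(k-nN) g_l(k+pM-nN)`. -/
def gaborG (L M N : ℕ) (g : ℕ → ℤ × ℤ → ℍ) (k p : ℤ × ℤ) : ℍ :=
  ∑ l ∈ Finset.range L, ∑' n : ℤ × ℤ,
    g l (k.1 - n.1 * (N : ℤ), k.2 - n.2 * (N : ℤ)) *
      g l (k.1 + p.1 * (M : ℤ) - n.1 * (N : ℤ), k.2 + p.2 * (M : ℤ) - n.2 * (N : ℤ))

/-- Mixed version: `∑_{l<L} ∑_{n∈ℤ²} g_l(k-nN) h_l(k+pM-nN)`. -/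
def gaborGmix (L M N : ℕ) (g h : ℕ → ℤ × ℤ → ℍ) (k p : ℤ × ℤ) : ℍ :=
  ∑ l ∈ Finset.range L, ∑' n : ℤ × ℤ,
    g l (k.1 - n.1 * (N : ℤ), k.2 - n.2 * (N : ℤ)) *
      h l (k.1 + p.1 * (M : ℤ) - n.1 * (N : ℤ), k.2 + p.2 * (M : ℤ) - n.2 * (N : ℤ))

/-- `∑_{l<L} ∑_{n∈ℤ²} |g_l(k-nN)|²`. -/
def winSum (L N : ℕ) (g : ℕ → ℤ × ℤ → ℍ) (k : ℤ × ℤ) : ℝ :=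
  ∑ l ∈ Finset.range L, ∑' n : ℤ × ℤ,
    ‖g l (k.1 - n.1 * (N : ℤ), k.2 - n.2 * (N : ℤ))‖ ^ 2

/-- Support of diameter `< M` in every row and every column. -/
def DiamLt (M : ℕ) (f : ℤ × ℤ → ℍ) : Prop :=
  (∀ k₂ k₁ k₁' : ℤ, f (k₁, k₂) ≠ 0 → f (k₁', k₂) ≠ 0 → |k₁ - k₁'| < (M : ℤ)) ∧
  (∀ k₁ k₂ k₂' : ℤ, f (k₁, k₂) ≠ 0 → f (k₁, k₂') ≠ 0 → |k₂ - k₂'| < (M : ℤ))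

/-- `M`-periodicity. -/
def MPeriodic (M : ℕ) (f : ℤ × ℤ → ℍ) : Prop :=
  ∀ k : ℤ × ℤ, f (k.1 + (M : ℤ), k.2) = f k ∧ f (k.1, k.2 + (M : ℤ)) = f k

/-- Duality of two Gabor systems (on finitely supported sequences). -/
def AreDual (L M N : ℕ) (g h : ℕ → ℤ × ℤ → ℍ) : Prop :=
  ∀ f φ : ℤ × ℤ → ℍ, (Function.support f).Finite → (Function.support φ).Finite →
    (∑ l ∈ Finset.range L, ∑' n : ℤ × ℤ, ∑ m ∈ msq M,
      qpair f (gaborAtom M N (g l) m n) * qpair (gaborAtom M N (h l) m n) φ)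
      = qpair f φ

/-! Testing the Parseval identity on the unit impulse at `k`, the unimodular phases `e_i`, `e_j`
of the atoms drop out and leave `M² ∑_l ∑_n |g_l(k - nN)|² = 1` for every `k ∈ ℤ²`. Summing this
over the `N²` points of a fundamental domain `{0, …, N-1}²` of `Nℤ²` recovers `∑_l ‖g_l‖²`. -/

lemma norm_eI (θ : ℝ) : ‖eI θ‖ = 1 := by
  rw [norm_eq_sqrt_real_inner, Quaternion.inner_self, Quaternion.normSq_def']
  simp [eI]

lemma norm_eJ (θ : ℝ) : ‖eJ θ‖ = 1 := by
  rw [norm_eq_sqrt_real_inner, Quaternion.inner_self, Quaternion.normSq_def']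
  simp [eJ]

lemma norm_gaborAtom_apply (M N : ℕ) (w : ℤ × ℤ → ℍ) (m : ℕ × ℕ) (n k : ℤ × ℤ) :
    ‖gaborAtom M N w m n k‖ = ‖w (k.1 - n.1 * N, k.2 - n.2 * N)‖ := by
  simp [gaborAtom, norm_eI, norm_eJ]

lemma memL2_single (k₀ : ℤ × ℤ) (a : ℍ) : MemL2 (Pi.single k₀ a) :=
  summable_of_ne_finset_zero (s := {k₀}) fun k hk => by
    simp [Pi.single_eq_of_ne (Finset.notMem_singleton.mp hk)]

lemma normSq2_single (k₀ : ℤ × ℤ) (a : ℍ) : normSq2 (Pi.single k₀ a) = ‖a‖ ^ 2 := by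
  rw [normSq2, tsum_eq_single k₀ fun k hk => by simp [Pi.single_eq_of_ne hk]]
  simp

lemma qpair_single (f : ℤ × ℤ → ℍ) (k₀ : ℤ × ℤ) (a : ℍ) :
    qpair f (Pi.single k₀ a) = star (f k₀) * a := by
  rw [qpair, tsum_eq_single k₀ fun k hk => by simp [Pi.single_eq_of_ne hk]]
  simp

lemma frameSum_single (L M N : ℕ) (g : ℕ → ℤ × ℤ → ℍ) (k₀ : ℤ × ℤ) :
    frameSum L M N g (Pi.single k₀ 1) = (M : ℝ) ^ 2 * winSum L N g k₀ := by
  simp only [frameSum, winSum, qpair_single, mul_one, norm_star, norm_gaborAtom_apply,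
    Finset.sum_const, Finset.card_product, Finset.card_range, nsmul_eq_mul, tsum_mul_left,
    Finset.mul_sum]
  push_cast
  simp only [sq]

lemma IsParseval.sq_mul_winSum_eq_one {L M N : ℕ} {g : ℕ → ℤ × ℤ → ℍ}
    (hpar : IsParseval L M N g) (k : ℤ × ℤ) : (M : ℝ) ^ 2 * winSum L N g k = 1 := by
  simpa [frameSum_single, normSq2_single] using hpar _ (memL2_single k 1)

def finProdIntEquivInt (N : ℕ) [NeZero N] : Fin N × ℤ ≃ ℤ :=
  (Equiv.prodComm _ _).trans (((Equiv.neg ℤ).prodCongr (Equiv.refl _)).trans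
    (Int.divModEquiv N).symm)

lemma finProdIntEquivInt_apply (N : ℕ) [NeZero N] (r : Fin N) (n : ℤ) :
    finProdIntEquivInt N (r, n) = r - n * N := by
  simp [finProdIntEquivInt]
  ring

lemma tsum_eq_sum_fin_sq_tsum_sub_mul {E : Type*} [NormedAddCommGroup E] [CompleteSpace E]
    (N : ℕ) [NeZero N] {f : ℤ × ℤ → E} (hf : Summable f) :
    ∑' k, f k = ∑ r : Fin N × Fin N, ∑' n : ℤ × ℤ, f (r.1 - n.1 * N, r.2 - n.2 * N) := by
  let e : (Fin N × Fin N) × (ℤ × ℤ) ≃ ℤ × ℤ :=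
    (Equiv.prodProdProdComm _ _ _ _).trans
      ((finProdIntEquivInt N).prodCongr (finProdIntEquivInt N))
  have he : ∀ x, e x = (x.1.1 - x.2.1 * N, x.1.2 - x.2.2 * N) := fun x => by
    simp [e, finProdIntEquivInt_apply]
  have hfe : Summable (f ∘ e) := e.summable_iff.mpr hf
  rw [← e.tsum_eq, ← Function.comp_def, hfe.tsum_prod, tsum_fintype]
  simp only [Function.comp_apply, he]

lemma sum_normSq2_eq_sum_winSum (L N : ℕ) [NeZero N] (g : ℕ → ℤ × ℤ → ℍ)
    (hg : ∀ l < L, MemL2 (g l)) :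
    ∑ l ∈ Finset.range L, normSq2 (g l) = ∑ r : Fin N × Fin N, winSum L N g (r.1, r.2) := by
  simp only [winSum]
  rw [Finset.sum_comm]
  refine Finset.sum_congr rfl fun l hl => ?_
  exact tsum_eq_sum_fin_sq_tsum_sub_mul N (hg l (Finset.mem_range.mp hl))

theorem stmt_2_general (L M N : ℕ) (hN : 0 < N)
    (g : ℕ → ℤ × ℤ → ℍ) (hg : ∀ l < L, MemL2 (g l))
    (hpar : IsParseval L M N g) :
    ∑ l ∈ Finset.range L, normSq2 (g l) = (N : ℝ) ^ 2 / (M : ℝ) ^ 2 := by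
  have : NeZero N := ⟨hN.ne'⟩
  have hwin (k : ℤ × ℤ) : winSum L N g k = ((M : ℝ) ^ 2)⁻¹ :=
    eq_inv_of_mul_eq_one_right (hpar.sq_mul_winSum_eq_one k)
  simp only [sum_normSq2_eq_sum_winSum L N g hg, hwin, Finset.sum_const, Finset.card_univ,
    Fintype.card_prod, Fintype.card_fin, nsmul_eq_mul]
  push_cast
  ring

/-- for a Parseval quaternionic Gabor frame, `∑_l ‖g_l‖² = N²/M²`. -/
theorem stmt_2 (L M N : ℕ) (hL : 0 < L) (hM : 0 < M) (hN : 0 < N)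
    (g : ℕ → ℤ × ℤ → ℍ) (hg : ∀ l < L, MemL2 (g l))
    (hpar : IsParseval L M N g) :
    ∑ l ∈ Finset.range L, normSq2 (g l) = (N : ℝ) ^ 2 / (M : ℝ) ^ 2 :=
  stmt_2_general L M N hN g hg hpar
end
end

section
/- Let L, M, N be positive integers and let g_0, …, g_{L−1} and h_0, …, h_{L−1} be real-valued elements of ℓ²(ℤ²,ℍ). Then for all finitely supported f, φ : ℤ×ℤ → ℍ: ∑_{l=0}^{L−1} ∑_{n∈ℤ²} ∑_{m∈{0,…,M−1}²} ⟨f, E_{m/M}T_{nN}g_l⟩·⟨E_{m/M}T_{nN}h_l, φ⟩ = M² ∑_{k∈ℤ²} ∑_{p∈ℤ²} ( ∑_{l=0}^{L−1} ∑_{n∈ℤ²} g_l(k−nN)·h_l(k+pM−nN) )·conj(f(k))·φ(k+pM), where nN := (n₁N,n₂N) and pM := (p₁M,p₂M). -/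
/-! Expanding both pairings turns each summand into
`conj (f k) · (E T g)(k) · conj ((E T h)(k')) · φ k'`. Since the windows are real they commute
with `e_i` and `e_j`, so the sum over `m₂` collapses to the real number `M · [M ∣ k₂ - k₂']`,
and then the sum over `m₁` of `e_i(2π m₁ (k₁ - k₁')/M)` collapses to `M · [M ∣ k₁ - k₁']`;
both are sums of `M`-th roots of unity. Summing over `n` gives the lattice correlation
`∑ₙ g(k - nN) h(k' - nN)`, and writing `k' = k + pM` yields the right-hand side. All sums over
`k, k'` are finite because `f` and `φ` are finitely supported. -/

noncomputable section

open scoped Real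

open Finset

theorem IsPrimitiveRoot.geom_sum_zpow_eq_ite {K : Type*} [Field K] {ζ : K} {M : ℕ}
    (hζ : IsPrimitiveRoot ζ M) (d : ℤ) :
    ∑ m ∈ range M, (ζ ^ d) ^ m = if (M : ℤ) ∣ d then (M : K) else 0 := by
  split_ifs with hd
  · simp [(hζ.zpow_eq_one_iff_dvd d).mpr hd]
  · have hne : ζ ^ d ≠ 1 := fun h => hd ((hζ.zpow_eq_one_iff_dvd d).mp h)
    rw [geom_sum_eq hne, ← zpow_natCast, ← zpow_mul, mul_comm, zpow_mul, zpow_natCast,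
      hζ.pow_eq_one, one_zpow, sub_self, zero_div]

theorem Complex.sum_range_liftAux_exp {A : Type*} [Ring A] [Algebra ℝ A] (I' : A)
    (hI' : I' * I' = -1) {M : ℕ} (hM : M ≠ 0) (d : ℤ) :
    ∑ m ∈ range M, Complex.liftAux I' hI' (Complex.exp (2 * π * m * d / M * Complex.I)) =
      if (M : ℤ) ∣ d then (M : A) else 0 := by
  have hexp : ∀ m : ℕ, Complex.exp (2 * π * m * d / M * Complex.I) =
      (Complex.exp (2 * π * Complex.I / M) ^ d) ^ m := fun m => by
    rw [← Complex.exp_int_mul, ← Complex.exp_nat_mul]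
    ring_nf
  simp only [hexp, ← map_sum, (Complex.isPrimitiveRoot_exp M hM).geom_sum_zpow_eq_ite d]
  split_ifs <;> simp

-- Named constants of type `ℍ`: an inline `⟨0, 1, 0, 0⟩` is typed `QuaternionAlgebra ℝ (-1) 0 (-1)`,
-- whose instances do not unify with those of `ℍ` when rewriting.
def quatI : ℍ := ⟨0, 1, 0, 0⟩

def quatJ : ℍ := ⟨0, 0, 1, 0⟩

theorem quatI_mul_self : quatI * quatI = -1 := by
  ext <;> simp only [Quaternion.re_mul, Quaternion.imI_mul, Quaternion.imJ_mul,
    Quaternion.imK_mul, Quaternion.re_neg, Quaternion.imI_neg, Quaternion.imJ_neg,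
    Quaternion.imK_neg, Quaternion.re_one, Quaternion.imI_one, Quaternion.imJ_one,
    Quaternion.imK_one] <;> simp [quatI]

theorem quatJ_mul_self : quatJ * quatJ = -1 := by
  ext <;> simp only [Quaternion.re_mul, Quaternion.imI_mul, Quaternion.imJ_mul,
    Quaternion.imK_mul, Quaternion.re_neg, Quaternion.imI_neg, Quaternion.imJ_neg,
    Quaternion.imK_neg, Quaternion.re_one, Quaternion.imI_one, Quaternion.imJ_one,
    Quaternion.imK_one] <;> simp [quatJ]

theorem eI_eq_liftAux (θ : ℝ) :
    eI θ = Complex.liftAux quatI quatI_mul_self (Complex.exp (θ * Complex.I)) := by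
  rw [Complex.liftAux_apply, Complex.exp_ofReal_mul_I_re, Complex.exp_ofReal_mul_I_im]
  ext <;> simp only [Quaternion.re_add, Quaternion.imI_add, Quaternion.imJ_add,
    Quaternion.imK_add, Quaternion.re_smul, Quaternion.imI_smul, Quaternion.imJ_smul,
    Quaternion.imK_smul, Quaternion.algebraMap_def] <;> simp [eI, quatI]

theorem eJ_eq_liftAux (θ : ℝ) :
    eJ θ = Complex.liftAux quatJ quatJ_mul_self (Complex.exp (θ * Complex.I)) := by
  rw [Complex.liftAux_apply, Complex.exp_ofReal_mul_I_re, Complex.exp_ofReal_mul_I_im]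
  ext <;> simp only [Quaternion.re_add, Quaternion.imI_add, Quaternion.imJ_add,
    Quaternion.imK_add, Quaternion.re_smul, Quaternion.imI_smul, Quaternion.imJ_smul,
    Quaternion.imK_smul, Quaternion.algebraMap_def] <;> simp [eJ, quatJ]

theorem eI_add (a b : ℝ) : eI (a + b) = eI a * eI b := by
  simp only [eI_eq_liftAux, Complex.ofReal_add, add_mul, Complex.exp_add, map_mul]

theorem eJ_add (a b : ℝ) : eJ (a + b) = eJ a * eJ b := by
  simp only [eJ_eq_liftAux, Complex.ofReal_add, add_mul, Complex.exp_add, map_mul]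

theorem star_eI (θ : ℝ) : star (eI θ) = eI (-θ) := by
  ext <;> simp only [Quaternion.re_star, Quaternion.imI_star, Quaternion.imJ_star,
    Quaternion.imK_star] <;> simp [eI]

theorem star_eJ (θ : ℝ) : star (eJ θ) = eJ (-θ) := by
  ext <;> simp only [Quaternion.re_star, Quaternion.imI_star, Quaternion.imJ_star,
    Quaternion.imK_star] <;> simp [eJ]

theorem sum_range_eI {M : ℕ} (hM : M ≠ 0) (d : ℤ) :
    ∑ m ∈ range M, eI (2 * π * m * d / M) = if (M : ℤ) ∣ d then (M : ℍ) else 0 := by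
  simp only [eI_eq_liftAux]
  push_cast
  exact Complex.sum_range_liftAux_exp _ _ hM d

theorem sum_range_eJ {M : ℕ} (hM : M ≠ 0) (d : ℤ) :
    ∑ m ∈ range M, eJ (2 * π * m * d / M) = if (M : ℤ) ∣ d then (M : ℍ) else 0 := by
  simp only [eJ_eq_liftAux]
  push_cast
  exact Complex.sum_range_liftAux_exp _ _ hM d

theorem sum_msq_eI_mul_eJ_mul_eI {M : ℕ} (hM : M ≠ 0) (a b c : ℤ) :
    ∑ m ∈ msq M, eI (2 * π * m.1 * a / M) * eJ (2 * π * m.2 * b / M) *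
        eI (-(2 * π * m.1 * c / M)) =
      if (M : ℤ) ∣ a - c ∧ (M : ℤ) ∣ b then (M : ℍ) ^ 2 else 0 := by
  have hJ (x : ℍ) : Commute x (if (M : ℤ) ∣ b then (M : ℍ) else 0) := by
    split_ifs
    exacts [(Nat.cast_commute M x).symm, Commute.zero_right x]
  calc _ = ∑ m₁ ∈ range M, eI (2 * π * m₁ * a / M) * (∑ m₂ ∈ range M, eJ (2 * π * m₂ * b / M)) *
        eI (-(2 * π * m₁ * c / M)) := by
        simp only [sum_product, mul_sum, sum_mul]
    _ = (if (M : ℤ) ∣ b then (M : ℍ) else 0) *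
          ∑ m₁ ∈ range M, eI (2 * π * m₁ * (a - c : ℤ) / M) := by
        rw [sum_range_eJ hM b, mul_sum]
        refine sum_congr rfl fun m₁ _ => ?_
        rw [(hJ _).eq, mul_assoc, ← eI_add]
        push_cast
        ring_nf
    _ = _ := by
        rw [sum_range_eI hM]
        split_ifs <;> simp_all [sq]

theorem IsRealValued.commute {u : ℤ × ℤ → ℍ} (hu : IsRealValued u) (k : ℤ × ℤ) (q : ℍ) :
    Commute (u k) q := by
  rw [hu k]
  exact Quaternion.coe_commute _ q

theorem IsRealValued.star_apply {u : ℤ × ℤ → ℍ} (hu : IsRealValued u) (k : ℤ × ℤ) :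
    star (u k) = u k := by
  rw [hu k, Quaternion.star_coe]

theorem gaborAtom_mul_star_gaborAtom {M N : ℕ} {u v : ℤ × ℤ → ℍ} (hu : IsRealValued u)
    (hv : IsRealValued v) (m : ℕ × ℕ) (n k k' : ℤ × ℤ) :
    gaborAtom M N u m n k * star (gaborAtom M N v m n k') =
      u (k.1 - n.1 * N, k.2 - n.2 * N) * v (k'.1 - n.1 * N, k'.2 - n.2 * N) *
        (eI (2 * π * m.1 * k.1 / M) * eJ (2 * π * m.2 * (k.2 - k'.2 : ℤ) / M) *
          eI (-(2 * π * m.1 * k'.1 / M))) := by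
  have hJ : (2 * π * m.2 * (k.2 - k'.2 : ℤ) / M : ℝ) =
      2 * π * m.2 * k.2 / M + -(2 * π * m.2 * k'.2 / M) := by
    push_cast
    ring
  simp only [gaborAtom, star_mul, star_eI, star_eJ, hv.star_apply, hJ, eJ_add]
  rw [hu (k.1 - n.1 * N, k.2 - n.2 * N), hv (k'.1 - n.1 * N, k'.2 - n.2 * N)]
  simp only [Quaternion.coe_mul_eq_smul, Quaternion.mul_coe_eq_smul, smul_mul_assoc,
    mul_smul_comm, smul_smul, mul_assoc, mul_comm]

theorem sum_msq_gaborAtom_mul_star_gaborAtom {M N : ℕ} (hM : M ≠ 0) {u v : ℤ × ℤ → ℍ}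
    (hu : IsRealValued u) (hv : IsRealValued v) (n k k' : ℤ × ℤ) :
    ∑ m ∈ msq M, gaborAtom M N u m n k * star (gaborAtom M N v m n k') =
      if (M : ℤ) ∣ k.1 - k'.1 ∧ (M : ℤ) ∣ k.2 - k'.2 then
        (M : ℍ) ^ 2 * (u (k.1 - n.1 * N, k.2 - n.2 * N) * v (k'.1 - n.1 * N, k'.2 - n.2 * N))
      else 0 := by
  simp only [gaborAtom_mul_star_gaborAtom hu hv, ← mul_sum, sum_msq_eI_mul_eJ_mul_eI hM]
  split_ifs
  exacts [((Nat.cast_commute M _).pow_left 2).eq.symm, mul_zero _]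

theorem injective_lattice_sub {c : ℤ} (hc : c ≠ 0) (k : ℤ × ℤ) :
    Function.Injective fun n : ℤ × ℤ => (k.1 - n.1 * c, k.2 - n.2 * c) := by
  intro n n' h
  simp only [Prod.mk.injEq] at h
  exact Prod.ext (mul_right_cancel₀ hc (by linarith [h.1]))
    (mul_right_cancel₀ hc (by linarith [h.2]))

theorem injective_lattice_add {c : ℤ} (hc : c ≠ 0) (k : ℤ × ℤ) :
    Function.Injective fun n : ℤ × ℤ => (k.1 + n.1 * c, k.2 + n.2 * c) := by
  intro n n' h
  simp only [Prod.mk.injEq] at h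
  exact Prod.ext (mul_right_cancel₀ hc (by linarith [h.1]))
    (mul_right_cancel₀ hc (by linarith [h.2]))

theorem MemL2.summable_mul_comp {ι : Type*} {u v : ℤ × ℤ → ℍ} (hu : MemL2 u) (hv : MemL2 v)
    {i j : ι → ℤ × ℤ} (hi : Function.Injective i) (hj : Function.Injective j) :
    Summable fun n => u (i n) * v (j n) := by
  refine Summable.of_norm_bounded ((Summable.comp_injective hu hi).add
    (Summable.comp_injective hv hj)) fun n => ?_
  rw [norm_mul]
  change _ ≤ ‖u (i n)‖ ^ 2 + ‖v (j n)‖ ^ 2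
  nlinarith [norm_nonneg (u (i n)), norm_nonneg (v (j n)), sq_nonneg (‖u (i n)‖ - ‖v (j n)‖)]

def crossCorr (N : ℕ) (u v : ℤ × ℤ → ℍ) (k k' : ℤ × ℤ) : ℍ :=
  ∑' n : ℤ × ℤ, u (k.1 - n.1 * N, k.2 - n.2 * N) * v (k'.1 - n.1 * N, k'.2 - n.2 * N)

theorem commute_crossCorr {N : ℕ} {u v : ℤ × ℤ → ℍ} (hu : IsRealValued u) (hv : IsRealValued v)
    (k k' : ℤ × ℤ) (q : ℍ) : Commute (crossCorr N u v k k') q :=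
  Commute.tsum_left q fun _ => (hu.commute _ q).mul_left (hv.commute _ q)

theorem qpair_mul_qpair_eq_sum {f φ a b : ℤ × ℤ → ℍ} {S T : Finset (ℤ × ℤ)}
    (hS : ∀ k ∉ S, f k = 0) (hT : ∀ k ∉ T, φ k = 0) :
    qpair f a * qpair b φ = ∑ k ∈ S, ∑ k' ∈ T, star (f k) * (a k * star (b k')) * φ k' := by
  rw [qpair, qpair, tsum_eq_sum (s := S) fun k hk => by simp [hS k hk],
    tsum_eq_sum (s := T) fun k hk => by simp [hT k hk], sum_mul_sum]
  simp only [mul_assoc]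

theorem tsum_sum_qpair_gaborAtom_mul_qpair_gaborAtom {M N : ℕ} (hM : M ≠ 0) (hN : N ≠ 0)
    {u v f φ : ℤ × ℤ → ℍ} (hu : MemL2 u) (hv : MemL2 v) (hur : IsRealValued u)
    (hvr : IsRealValued v) {S T : Finset (ℤ × ℤ)} (hS : ∀ k ∉ S, f k = 0)
    (hT : ∀ k ∉ T, φ k = 0) :
    ∑' n : ℤ × ℤ, ∑ m ∈ msq M, qpair f (gaborAtom M N u m n) * qpair (gaborAtom M N v m n) φ =
      ∑ k ∈ S, ∑ k' ∈ T, if (M : ℤ) ∣ k.1 - k'.1 ∧ (M : ℤ) ∣ k.2 - k'.2 then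
        (M : ℍ) ^ 2 * crossCorr N u v k k' * star (f k) * φ k' else 0 := by
  have hN' : (N : ℤ) ≠ 0 := Int.natCast_ne_zero.mpr hN
  have hterm (k k' : ℤ × ℤ) : HasSum
      (fun n : ℤ × ℤ => star (f k) * (if (M : ℤ) ∣ k.1 - k'.1 ∧ (M : ℤ) ∣ k.2 - k'.2 then
        (M : ℍ) ^ 2 * (u (k.1 - n.1 * N, k.2 - n.2 * N) * v (k'.1 - n.1 * N, k'.2 - n.2 * N))
        else 0) * φ k')
      (if (M : ℤ) ∣ k.1 - k'.1 ∧ (M : ℤ) ∣ k.2 - k'.2 then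
        (M : ℍ) ^ 2 * crossCorr N u v k k' * star (f k) * φ k' else 0) := by
    split_ifs
    · have hsum := ((hu.summable_mul_comp hv (injective_lattice_sub hN' k)
        (injective_lattice_sub hN' k')).hasSum.mul_left ((M : ℍ) ^ 2)).mul_left (star (f k))
      rw [(((Nat.cast_commute M _).pow_left 2).mul_left (commute_crossCorr hur hvr k k' _)).eq]
      exact hsum.mul_right (φ k')
    · simp
  calc _ = ∑' n : ℤ × ℤ, ∑ k ∈ S, ∑ k' ∈ T, star (f k) *
        (if (M : ℤ) ∣ k.1 - k'.1 ∧ (M : ℤ) ∣ k.2 - k'.2 then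
          (M : ℍ) ^ 2 * (u (k.1 - n.1 * N, k.2 - n.2 * N) * v (k'.1 - n.1 * N, k'.2 - n.2 * N))
        else 0) * φ k' := by
        refine tsum_congr fun n => ?_
        simp only [qpair_mul_qpair_eq_sum hS hT]
        rw [sum_comm]
        refine sum_congr rfl fun k _ => ?_
        rw [sum_comm]
        refine sum_congr rfl fun k' _ => ?_
        rw [← sum_mul, ← mul_sum, sum_msq_gaborAtom_mul_star_gaborAtom hM hur hvr]
    _ = _ := (hasSum_sum fun k _ => hasSum_sum fun k' _ => hterm k k').tsum_eq

theorem tsum_comp_lattice_add_eq_tsum_ite {α : Type*} [AddCommMonoid α] [TopologicalSpace α]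
    {c : ℤ} (hc : c ≠ 0) (F : ℤ × ℤ → α) (k : ℤ × ℤ) :
    ∑' p : ℤ × ℤ, F (k.1 + p.1 * c, k.2 + p.2 * c) =
      ∑' k' : ℤ × ℤ, if c ∣ k.1 - k'.1 ∧ c ∣ k.2 - k'.2 then F k' else 0 := by
  have hsupp : Function.support (fun k' => if c ∣ k.1 - k'.1 ∧ c ∣ k.2 - k'.2 then F k' else 0) ⊆
      Set.range fun p : ℤ × ℤ => (k.1 + p.1 * c, k.2 + p.2 * c) := by
    intro k' hk'
    obtain ⟨⟨d₁, hd₁⟩, ⟨d₂, hd₂⟩⟩ : c ∣ k.1 - k'.1 ∧ c ∣ k.2 - k'.2 := by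
      by_contra h
      exact hk' (if_neg h)
    exact ⟨(-d₁, -d₂), Prod.ext (by dsimp only; linarith) (by dsimp only; linarith)⟩
  rw [← (injective_lattice_add hc k).tsum_eq hsupp]
  refine tsum_congr fun p => ?_
  rw [if_pos ⟨⟨-p.1, by dsimp only; ring⟩, ⟨-p.2, by dsimp only; ring⟩⟩]

theorem tsum_tsum_comp_lattice_add_eq_sum_sum {α : Type*} [AddCommMonoid α] [TopologicalSpace α]
    {c : ℤ} (hc : c ≠ 0) (F : ℤ × ℤ → ℤ × ℤ → α) {S T : Finset (ℤ × ℤ)}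
    (hS : ∀ k ∉ S, ∀ k', F k k' = 0) (hT : ∀ k, ∀ k' ∉ T, F k k' = 0) :
    ∑' k : ℤ × ℤ, ∑' p : ℤ × ℤ, F k (k.1 + p.1 * c, k.2 + p.2 * c) =
      ∑ k ∈ S, ∑ k' ∈ T, if c ∣ k.1 - k'.1 ∧ c ∣ k.2 - k'.2 then F k k' else 0 := by
  simp only [tsum_comp_lattice_add_eq_tsum_ite hc]
  rw [tsum_eq_sum (s := S) fun k hk => by simp [hS k hk]]
  exact sum_congr rfl fun k _ => tsum_eq_sum fun k' hk' => by simp [hT k k' hk']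

theorem stmt_16_general (L M N : ℕ) (hM : 0 < M) (hN : 0 < N)
    (g h : ℕ → ℤ × ℤ → ℍ)
    (hg : ∀ l < L, MemL2 (g l)) (hh : ∀ l < L, MemL2 (h l))
    (hgreal : ∀ l < L, IsRealValued (g l)) (hhreal : ∀ l < L, IsRealValued (h l)) :
    ∀ f φ : ℤ × ℤ → ℍ, (Function.support f).Finite → (Function.support φ).Finite →
      (∑ l ∈ Finset.range L, ∑' n : ℤ × ℤ, ∑ m ∈ msq M,
        qpair f (gaborAtom M N (g l) m n) * qpair (gaborAtom M N (h l) m n) φ) =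
      (M : ℍ) ^ 2 * ∑' k : ℤ × ℤ, ∑' p : ℤ × ℤ,
        gaborGmix L M N g h k p * star (f k) *
          φ (k.1 + p.1 * (M : ℤ), k.2 + p.2 * (M : ℤ)) := by
  intro f φ hf hφ
  have hS : ∀ k ∉ hf.toFinset, f k = 0 := by simp
  have hT : ∀ k ∉ hφ.toFinset, φ k = 0 := by simp
  rw [sum_congr rfl fun l hl => tsum_sum_qpair_gaborAtom_mul_qpair_gaborAtom hM.ne' hN.ne'
      (hg l (mem_range.mp hl)) (hh l (mem_range.mp hl)) (hgreal l (mem_range.mp hl))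
      (hhreal l (mem_range.mp hl)) hS hT, sum_comm]
  simp_rw [sum_comm (s := range L), sum_ite_irrel, sum_const_zero, ← sum_mul, ← mul_sum,
    ← tsum_mul_left, ← mul_assoc]
  exact (tsum_tsum_comp_lattice_add_eq_sum_sum (Int.natCast_ne_zero.mpr hM.ne')
    (fun k k' => (M : ℍ) ^ 2 * (∑ l ∈ range L, crossCorr N (g l) (h l) k k') * star (f k) * φ k')
    (fun k hk k' => by simp [hS k hk]) (fun k k' hk' => by simp [hT k' hk'])).symm

/-- the fundamental identity for two Gabor systems with real-valued
windows, on finitely supported sequences. -/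
theorem stmt_16 (L M N : ℕ) (hL : 0 < L) (hM : 0 < M) (hN : 0 < N)
    (g h : ℕ → ℤ × ℤ → ℍ)
    (hg : ∀ l < L, MemL2 (g l)) (hh : ∀ l < L, MemL2 (h l))
    (hgreal : ∀ l < L, IsRealValued (g l)) (hhreal : ∀ l < L, IsRealValued (h l)) :
    ∀ f φ : ℤ × ℤ → ℍ, (Function.support f).Finite → (Function.support φ).Finite →
      (∑ l ∈ Finset.range L, ∑' n : ℤ × ℤ, ∑ m ∈ msq M,
        qpair f (gaborAtom M N (g l) m n) * qpair (gaborAtom M N (h l) m n) φ) =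
      (M : ℍ) ^ 2 * ∑' k : ℤ × ℤ, ∑' p : ℤ × ℤ,
        gaborGmix L M N g h k p * star (f k) *
          φ (k.1 + p.1 * (M : ℤ), k.2 + p.2 * (M : ℤ)) :=
  stmt_16_general L M N hM hN g h hg hh hgreal hhreal
end
end
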